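/- arXiv:2412.03532 — 2 statements merged into one kernel-verified Lean document; each statement's English description precedes it below -/
import Mathlib

section
/- Let Γ be a finite connected multigraph, let V_• = (V₁,…,V_k) be an ordered partition of V(Γ), and let G be a spanning subgraph of Γ. Then D(𝒪_G(V_•)) − D(𝒪_G(V̄_•)) is a principal divisor on G if and only if there exists an ordered partition W_• = (W₀,…,W_q) of V(Γ) such that (i) 𝒪_G(V_•) = 𝒪_G(W_•) and (ii) E_G(W_i, W_j) = ∅ unless j − i = ±1. In that case, D(𝒪_G(V_•)) − D(𝒪_G(V̄_•)) = Σ_{i=0}^{q} (q−i)·div(χ_{W_i}), where χ_{W} denotes the indicator function of W ⊆ V(G). -/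
noncomputable section

attribute [local instance 10] Classical.propDecidable

/-- A finite multigraph on vertex type `V` with edge type `E`: each edge is given a
reference source and target vertex. Loops and multiple edges are allowed. -/
structure Multigraph (V E : Type) where
  src : E → V
  tgt : E → V

/-- `A` is a disjoint union of elements of the class `D`. -/
def IsDisjUnionOf {V : Type} [DecidableEq V] (D : Set (Finset V)) (A : Finset V) : Prop :=
  ∃ C : Finset (Finset V), (∀ X ∈ C, X ∈ D) ∧
    (C : Set (Finset V)).Pairwise (fun X Y => Disjoint X Y) ∧ C.sup id = A

/-- An ordered partition of the vertex set: a list of nonempty, pairwise disjoint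
subsets covering every vertex. -/
def IsOrdPart {V : Type} (L : List (Finset V)) : Prop :=
  (∀ A ∈ L, A.Nonempty) ∧ L.Pairwise (fun A B => Disjoint A B) ∧ ∀ v : V, ∃ A ∈ L, v ∈ A

/-- The index of the part of `L` containing `v`. -/
def partIdx {V : Type} [DecidableEq V] (L : List (Finset V)) (v : V) : ℕ :=
  L.findIdx (fun A => decide (v ∈ A))

/-- The union of the first `i` parts of `L`. -/
def unionUpTo {V : Type} [DecidableEq V] (L : List (Finset V)) (i : ℕ) : Finset V :=
  (L.take i).foldr (· ∪ ·) ∅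

/-- `D_W`, the total value of the divisor `Dv` on `W`. -/
def divSum {V : Type} [Fintype V] (Dv : V → ℤ) (W : Finset V) : ℤ := ∑ v ∈ W, Dv v

/-- `𝕆^d(Γ)`: pairs (removed edge set `S`, divisor of total degree `d - |S|`),
representing the pair `(Γ∖S, D)`. -/
def OOset {V E : Type} [Fintype V] (d : ℤ) : Set (Finset E × (V → ℤ)) :=
  {p | divSum p.2 Finset.univ = d - (p.1.card : ℤ)}

/-- `𝒫(Γ∖S)` for a subset `P ⊆ 𝕆^d(Γ)`. -/
def PAt {V E : Type} (P : Set (Finset E × (V → ℤ))) (S : Finset E) : Set (V → ℤ) :=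
  {Dv | (S, Dv) ∈ P}

namespace Multigraph

variable {V E V' E' : Type}
variable [Fintype V] [DecidableEq V] [Fintype E] [DecidableEq E]
variable [Fintype V'] [DecidableEq V'] [Fintype E'] [DecidableEq E']
variable (G : Multigraph V E) (G' : Multigraph V' E')

/-- The number of edges in `T` joining `W₁` and `W₂`. -/
def valBtwIn (T : Finset E) (W₁ W₂ : Finset V) : ℕ :=
  (T.filter (fun e => (G.src e ∈ W₁ ∧ G.tgt e ∈ W₂) ∨ (G.src e ∈ W₂ ∧ G.tgt e ∈ W₁))).card

/-- `val(W₁, W₂)`: the number of edges of `Γ` joining `W₁` and `W₂`. -/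
def valBtw (W₁ W₂ : Finset V) : ℕ := G.valBtwIn Finset.univ W₁ W₂

/-- `val(W) := val(W, Wᶜ)`. -/
def valOf (W : Finset V) : ℕ := G.valBtw W Wᶜ

/-- `e_S(W)`: the number of edges in `S` with both endpoints in `W`. -/
def eIn (S : Finset E) (W : Finset V) : ℕ :=
  (S.filter (fun e => G.src e ∈ W ∧ G.tgt e ∈ W)).card

/-- The edges of the induced subgraph `Γ[W]`. -/
def edgesIn (W : Finset V) : Finset E :=
  Finset.univ.filter (fun e => G.src e ∈ W ∧ G.tgt e ∈ W)

/-- One-step adjacency inside the vertex set `W` using edges from `T`. -/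
def Step (T : Finset E) (W : Finset V) (a b : V) : Prop :=
  a ∈ W ∧ b ∈ W ∧ ∃ e ∈ T, (G.src e = a ∧ G.tgt e = b) ∨ (G.src e = b ∧ G.tgt e = a)

def Linked (T : Finset E) (W : Finset V) : V → V → Prop :=
  Relation.ReflTransGen (G.Step T W)

/-- The graph with vertex set `W` and those edges of `T` joining vertices of `W`
is nonempty and connected. -/
def IsConn (T : Finset E) (W : Finset V) : Prop :=
  W.Nonempty ∧ ∀ a ∈ W, ∀ b ∈ W, G.Linked T W a b

/-- `Con(Γ)`: nonempty subsets with connected induced subgraph. -/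
def Con : Set (Finset V) := {W | G.IsConn Finset.univ W}

/-- `BCon(Γ)`: biconnected subsets. -/
def BCon : Set (Finset V) := {W | G.IsConn Finset.univ W ∧ G.IsConn Finset.univ Wᶜ}

/-- The vertex set of the connected component of `v` in `(W, T)`. -/
def comp (T : Finset E) (W : Finset V) (v : V) : Finset V :=
  W.filter (fun u => G.Linked T W v u)

/-- The vertex sets of the connected components of `(W, T)`. -/
def comps (T : Finset E) (W : Finset V) : Finset (Finset V) :=
  W.image (G.comp T W)

/-- The vertex sets of the connected components of the spanning subgraph `Γ∖S`. -/
def compsRem (S : Finset E) : Finset (Finset V) := G.comps Sᶜ Finset.univ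

/-- `W` is `𝔫`-degenerate. -/
def Degen (n : Finset V → ℤ) (d : ℤ) (W : Finset V) : Prop :=
  n W + n Wᶜ + (G.valOf W : ℤ) - d = 0

/-- `W ∈ 𝒟(𝔫)`: a biconnected `𝔫`-degenerate subset. -/
def InDeg (n : Finset V → ℤ) (d : ℤ) (W : Finset V) : Prop :=
  W ∈ G.BCon ∧ G.Degen n d W

def triSum (n : Finset V → ℤ) (d : ℤ) (W₁ W₂ W₃ : Finset V) : ℤ :=
  n W₁ + n W₂ + n W₃ + (G.valBtw W₁ W₂ : ℤ) + (G.valBtw W₁ W₃ : ℤ) +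
    (G.valBtw W₂ W₃ : ℤ) - d

/-- A V-stability condition of degree `d` on `Γ` (the values of `n` outside
`BCon(Γ)` are irrelevant). -/
structure IsVStab (d : ℤ) (n : Finset V → ℤ) : Prop where
  one : ∀ W ∈ G.BCon,
    n W + n Wᶜ + (G.valOf W : ℤ) - d = 0 ∨ n W + n Wᶜ + (G.valOf W : ℤ) - d = 1
  two_deg : ∀ W₁ W₂ W₃ : Finset V, W₁ ∈ G.BCon → W₂ ∈ G.BCon → W₃ ∈ G.BCon →
    Disjoint W₁ W₂ → Disjoint W₁ W₃ → Disjoint W₂ W₃ → W₁ ∪ W₂ ∪ W₃ = Finset.univ →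
    ((G.Degen n d W₁ → G.Degen n d W₂ → G.Degen n d W₃) ∧
     (G.Degen n d W₁ → G.Degen n d W₃ → G.Degen n d W₂) ∧
     (G.Degen n d W₂ → G.Degen n d W₃ → G.Degen n d W₁))
  two_sum : ∀ W₁ W₂ W₃ : Finset V, W₁ ∈ G.BCon → W₂ ∈ G.BCon → W₃ ∈ G.BCon →
    Disjoint W₁ W₂ → Disjoint W₁ W₃ → Disjoint W₂ W₃ → W₁ ∪ W₂ ∪ W₃ = Finset.univ →
    ((¬ G.Degen n d W₁ ∧ ¬ G.Degen n d W₂ ∧ ¬ G.Degen n d W₃ →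
        G.triSum n d W₁ W₂ W₃ = 1 ∨ G.triSum n d W₁ W₂ W₃ = 2) ∧
     ((G.Degen n d W₁ ∧ ¬ G.Degen n d W₂ ∧ ¬ G.Degen n d W₃) ∨
      (¬ G.Degen n d W₁ ∧ G.Degen n d W₂ ∧ ¬ G.Degen n d W₃) ∨
      (¬ G.Degen n d W₁ ∧ ¬ G.Degen n d W₂ ∧ G.Degen n d W₃) →
        G.triSum n d W₁ W₂ W₃ = 1) ∧
     (G.Degen n d W₁ ∧ G.Degen n d W₂ ∧ G.Degen n d W₃ → G.triSum n d W₁ W₂ W₃ = 0))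

/-- The extended degeneracy subset associated to an abstract class `D` of subsets:
`V(Γ)` together with the connected `W` all of whose complementary components lie in `D`. -/
def ExtOf (D : Set (Finset V)) : Set (Finset V) :=
  {W | W = Finset.univ ∨ (W ∈ G.Con ∧ ∀ C ∈ G.comps Finset.univ Wᶜ, C ∈ D)}

/-- `𝒟̂(𝔫)`, the extended degeneracy subset of a V-stability. -/
def ExtDeg (n : Finset V → ℤ) (d : ℤ) : Set (Finset V) :=
  G.ExtOf {W | G.InDeg n d W}

/-- The value of the extended V-function on a connected subset. -/
def connVal (n : Finset V → ℤ) (d : ℤ) (W : Finset V) : ℤ :=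
  d - (∑ C ∈ G.comps Finset.univ Wᶜ, n C) - (G.valOf W : ℤ) +
    (((G.comps Finset.univ Wᶜ).filter (fun C => ¬ G.InDeg n d C)).card : ℤ)

/-- The extended V-function of `𝔫`, defined on all subsets of `V(Γ)`. -/
def extendV (n : Finset V → ℤ) (d : ℤ) (W : Finset V) : ℤ :=
  ∑ C ∈ G.comps Finset.univ W, G.connVal n d C

/-- The head (target) of the edge `e` under the orientation datum `o`. -/
def orientHead (o : E → Bool) (e : E) : V := if o e then G.tgt e else G.src e

/-- `D(𝒪)` for the partial orientation given by the edges `A` oriented by `o`. -/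
def divOrient (A : Finset E) (o : E → Bool) : V → ℤ :=
  fun v => ((A.filter (fun e => G.orientHead o e = v)).card : ℤ)

/-- `p ≥ q` in `𝕆(Γ)`. -/
def OOge (p q : Finset E × (V → ℤ)) : Prop :=
  p.1 ⊆ q.1 ∧ ∃ o : E → Bool, q.2 = p.2 - G.divOrient (q.1 \ p.1) o

/-- `P` is an upper subset of `𝕆^d(Γ)`. -/
def IsUpper (d : ℤ) (P : Set (Finset E × (V → ℤ))) : Prop :=
  P ⊆ OOset d ∧ ∀ p ∈ OOset d, ∀ q ∈ P, G.OOge p q → p ∈ P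

/-- The semistable set `𝒫_𝔫 ⊆ 𝕆^d(Γ)` of a V-stability condition. -/
def Pss (n : Finset V → ℤ) (d : ℤ) : Set (Finset E × (V → ℤ)) :=
  {p | p ∈ OOset d ∧ ∀ W ∈ G.BCon, n W ≤ divSum p.2 W + (G.eIn p.1 W : ℤ)}

/-- `𝒫_𝔫(Γ∖S)`. -/
def PssAt (n : Finset V → ℤ) (d : ℤ) (S : Finset E) : Set (V → ℤ) :=
  {Dv | (S, Dv) ∈ G.Pss n d}

/-- The polystable set `𝒫^{ps}_𝔫`. -/
def Pps (n : Finset V → ℤ) (d : ℤ) : Set (Finset E × (V → ℤ)) :=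
  {p | p ∈ G.Pss n d ∧ ∀ W, G.InDeg n d W →
    divSum p.2 W + (G.eIn p.1 W : ℤ) = n W →
    ∀ e : E, ¬ (G.src e ∈ W ↔ G.tgt e ∈ W) → e ∈ p.1}

/-- `𝒫^{ps}_𝔫(Γ∖S)`. -/
def PpsAt (n : Finset V → ℤ) (d : ℤ) (S : Finset E) : Set (V → ℤ) :=
  {Dv | (S, Dv) ∈ G.Pps n d}

/-- A degeneracy subset for `Γ`. -/
structure IsDegSubset (D : Set (Finset V)) : Prop where
  subset : ∀ W ∈ D, W ∈ G.BCon
  compl : ∀ W ∈ D, Wᶜ ∈ D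
  union : ∀ W₁ W₂ : Finset V, W₁ ∈ D → W₂ ∈ D → Disjoint W₁ W₂ →
    W₁ ∪ W₂ ∈ G.BCon → W₁ ∪ W₂ ∈ D

/-- The spanning subgraph `Γ∖S` is `D`-admissible. -/
def AdmRem (D : Set (Finset V)) (S : Finset E) : Prop :=
  ∀ C ∈ G.compsRem S, C ∈ G.ExtOf D

/-- `b₀(Γ∖S)`: the number of connected components of `Γ∖S`. -/
def b0Rem (S : Finset E) : ℕ := (G.compsRem S).card

/-- The spanning subgraph `Γ∖S` is a forest. -/
def ForestRem (S : Finset E) : Prop :=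
  Sᶜ.card + G.b0Rem S = Fintype.card V

/-- `Γ∖S` is a minimal `D`-admissible spanning subgraph. -/
def MinAdm (D : Set (Finset V)) (S : Finset E) : Prop :=
  G.AdmRem D S ∧ ∀ S' : Finset E, S ⊆ S' → G.AdmRem D S' → S' = S

/-- The `D`-complexity of `Γ∖S`: the number of `D`-admissible spanning forests of `Γ`
contained in `Γ∖S`. -/
def cD (D : Set (Finset V)) (S : Finset E) : ℕ :=
  ((Finset.univ : Finset (Finset E)).filter
    (fun F => S ⊆ F ∧ G.ForestRem F ∧ G.AdmRem D F)).card

/-- `b₁(Γ)`, the first Betti number of `Γ`. -/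
def b1 : ℤ := (Fintype.card E : ℤ) - (Fintype.card V : ℤ) + (G.b0Rem ∅ : ℤ)

/-- A `D`-forest function of degree `d` (encoded as a total function whose values
matter only on the minimal `D`-admissible spanning subgraphs). -/
def IsForestFun (D : Set (Finset V)) (d : ℤ) (I : Finset E → (V → ℤ)) : Prop :=
  ∀ S, G.MinAdm D S → divSum (I S) Finset.univ = d - G.b1 - (G.b0Rem S : ℤ) + 1

/-- `𝕆^d_D(Γ)`. -/
def OOD (D : Set (Finset V)) (d : ℤ) : Set (Finset E × (V → ℤ)) :=
  {p | p ∈ OOset d ∧ G.AdmRem D p.1}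

/-- `P` is an upper subset of `𝕆^d_D(Γ)`. -/
def IsUpperD (D : Set (Finset V)) (d : ℤ) (P : Set (Finset E × (V → ℤ))) : Prop :=
  P ⊆ G.OOD D d ∧ ∀ p ∈ G.OOD D d, ∀ q ∈ P, G.OOge p q → p ∈ P

/-- The BD-set of a forest function: the smallest upper subset of `𝕆^d_D(Γ)`
containing all the pairs `(F, I(F))` for `F` a minimal `D`-admissible spanning
subgraph. -/
def BDset (D : Set (Finset V)) (d : ℤ) (I : Finset E → (V → ℤ)) :
    Set (Finset E × (V → ℤ)) :=
  ⋂₀ {P | G.IsUpperD D d P ∧ ∀ S, G.MinAdm D S → (S, I S) ∈ P}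

/-- `BD_I(Γ∖S)`. -/
def BDAt (D : Set (Finset V)) (d : ℤ) (I : Finset E → (V → ℤ)) (S : Finset E) :
    Set (V → ℤ) :=
  {Dv | (S, Dv) ∈ G.BDset D d I}

/-- The divergence (chip-firing) of the function `f` on the subgraph with edge set `T`. -/
def divT (T : Finset E) (f : V → ℤ) : V → ℤ := fun v =>
  ∑ e ∈ T, ((if G.tgt e = v then f (G.src e) - f (G.tgt e) else 0) +
            (if G.src e = v then f (G.tgt e) - f (G.src e) else 0))

/-- Two divisors are chip-firing equivalent on `Γ∖S`, i.e. their difference is a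
principal divisor of `Γ∖S`; equivalently `π_{Γ∖S}(D₁) = π_{Γ∖S}(D₂)` in `Pic(Γ∖S)`. -/
def ChipEq (S : Finset E) (D₁ D₂ : V → ℤ) : Prop :=
  ∃ f : V → ℤ, D₂ = D₁ + G.divT Sᶜ f

/-- `E_G(V_•)`: the edges of the subgraph with edge set `T` joining two distinct
parts of the ordered partition `L`. -/
def crossEdges (T : Finset E) (L : List (Finset V)) : Finset E :=
  T.filter (fun e => partIdx L (G.src e) ≠ partIdx L (G.tgt e))

/-- `D(𝒪_G(V_•))`: the outgoing divisor of the partial orientation induced by the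
ordered partition `L` on the subgraph with edge set `T` (each crossing edge is
oriented from the lower-indexed part towards the higher-indexed part). -/
def divOP (T : Finset E) (L : List (Finset V)) : V → ℤ := fun v =>
  ((T.filter (fun e =>
      (G.tgt e = v ∧ partIdx L (G.src e) < partIdx L (G.tgt e)) ∨
      (G.src e = v ∧ partIdx L (G.tgt e) < partIdx L (G.src e)))).card : ℤ)

/-- Condition (a) of the definition of a PT-assignment at the spanning subgraph `Γ∖S`:
the map `π` from `P(Γ∖S)` to the Picard group surjects onto `Pic^δ` for some degree
assignment `δ` on the components with total sum `d - |S|`. -/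
def PTcondA (d : ℤ) (P : Set (Finset E × (V → ℤ))) (S : Finset E) : Prop :=
  ∃ δ : Finset V → ℤ, (∑ C ∈ G.compsRem S, δ C) = d - (S.card : ℤ) ∧
    ∀ D' : V → ℤ, (∀ C ∈ G.compsRem S, divSum D' C = δ C) →
      ∃ D₀ ∈ PAt P S, G.ChipEq S D₀ D'

/-- Condition (b) of the definition of a PT-assignment at the spanning subgraph `Γ∖S`. -/
def PTcondB (D : Set (Finset V)) (P : Set (Finset E × (V → ℤ))) (S : Finset E) : Prop :=
  ∀ D₁ ∈ PAt P S, ∀ D₂ ∈ PAt P S, G.ChipEq S D₁ D₂ →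
    ∃ L : List (Finset V), IsOrdPart L ∧
      (∀ A ∈ L, IsDisjUnionOf (G.ExtOf D) A) ∧
      D₁ - G.divOP Sᶜ L = D₂ - G.divOP Sᶜ L.reverse ∧
      (D₁ - G.divOP Sᶜ L) ∈ PAt P (S ∪ G.crossEdges Sᶜ L)

/-- The subposet `S_{Γ∖S₀}(P)`: spanning subgraphs of the form `(Γ∖S₀)∖E(W_•)` on
which `P` is nonempty. -/
def SOf (P : Set (Finset E × (V → ℤ))) (S₀ S : Finset E) : Prop :=
  (∃ L : List (Finset V), IsOrdPart L ∧ S = S₀ ∪ G.crossEdges S₀ᶜ L) ∧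
    (PAt P S).Nonempty

/-- `P` is a PT-assignment of degree `d` with degeneracy subset `D`. -/
def IsPT (D : Set (Finset V)) (d : ℤ) (P : Set (Finset E × (V → ℤ))) : Prop :=
  G.IsUpperD D d P ∧ ∀ S, G.AdmRem D S → G.PTcondA d P S ∧ G.PTcondB D P S

/-- `P` is a numerical PT-assignment of degree `d` with degeneracy subset `D`. -/
def IsNumPT (D : Set (Finset V)) (d : ℤ) (P : Set (Finset E × (V → ℤ))) : Prop :=
  G.IsUpperD D d P ∧ ∀ S, G.AdmRem D S → (PAt P S).ncard = G.cD D S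

/-- `P` is a weak PT-assignment of degree `d` with degeneracy subset `D`. -/
def IsWeakPT (D : Set (Finset V)) (d : ℤ) (P : Set (Finset E × (V → ℤ))) : Prop :=
  G.IsUpperD D d P ∧ ∀ S, G.SOf P ∅ S → G.PTcondA d P S ∧ G.PTcondB D P S

/-- `P` is a weak numerical PT-assignment of degree `d` with degeneracy subset `D`. -/
def IsWeakNumPT (D : Set (Finset V)) (d : ℤ) (P : Set (Finset E × (V → ℤ))) : Prop :=
  G.IsUpperD D d P ∧ (PAt P ∅).ncard = G.cD D ∅

/-- The subgraph of `Γ` with vertex set `U` and those edges of `T` lying inside `U`,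
regarded as a multigraph in its own right. -/
def subMG (U : Finset V) (T : Finset E) :
    Multigraph {v // v ∈ U} {e // e ∈ T ∩ G.edgesIn U} where
  src e := ⟨G.src e.1, (Finset.mem_filter.mp (Finset.mem_inter.mp e.2).2).2.1⟩
  tgt e := ⟨G.tgt e.1, (Finset.mem_filter.mp (Finset.mem_inter.mp e.2).2).2.2⟩

/-- The subgraph of `(W, T)` induced on `W` is a (spanning) forest of `Γ[W]`. -/
def ForestOn (W : Finset V) (T : Finset E) : Prop :=
  (T ∩ G.edgesIn W).card + (G.comps T W).card = W.card

/-- The minimal `D`-admissible spanning subgraph `Γ∖R` is adapted to `W`. -/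
def AdaptedTo (D : Set (Finset V)) (R : Finset E) (W : Finset V) : Prop :=
  G.MinAdm D R ∧ G.ForestOn W Rᶜ ∧ G.ForestOn Wᶜ Rᶜ ∧
    G.valBtwIn Rᶜ W Wᶜ = (if W ∈ D then 0 else 1)

/-- The quantity `I(F)_W + b₁(Γ[W]) + b₀(F[W]) - 1` defining `𝔫^I_W` from a forest
function `I`, computed using the minimal admissible spanning subgraph `Γ∖R`. -/
def nOfI (I : Finset E → (V → ℤ)) (R : Finset E) (W : Finset V) : ℤ :=
  divSum (I R) W + ((G.edgesIn W).card : ℤ) - (W.card : ℤ) +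
    ((G.comps Finset.univ W).card : ℤ) + ((G.comps Rᶜ W).card : ℤ) - 1

/-- The defining conditions for the divisor `I_𝔫(F)` at a minimal admissible spanning
subgraph `F = Γ∖R`: on the vertex set of each connected component `F_i` of `F` the
divisor has total value `|𝔫(F_i)|`, and for each edge `e` of `F`, on each of the two
pieces in which `e` splits its component, it has total value given by the restricted
V-stability `𝔫(F_{i_e})`. -/
def ForestDivCond (n : Finset V → ℤ) (d : ℤ) (R : Finset E) (Dv : V → ℤ) : Prop :=
  (∀ C ∈ G.compsRem R, divSum Dv C = G.extendV n d C - ((R ∩ G.edgesIn C).card : ℤ)) ∧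
  ∀ e ∈ Rᶜ,
    (divSum Dv (G.comp (Rᶜ \ {e}) Finset.univ (G.src e)) =
      G.extendV n d (G.comp (Rᶜ \ {e}) Finset.univ (G.src e)) -
        (G.eIn (R ∩ G.edgesIn (G.comp Rᶜ Finset.univ (G.src e)))
          (G.comp (Rᶜ \ {e}) Finset.univ (G.src e)) : ℤ)) ∧
    (divSum Dv (G.comp (Rᶜ \ {e}) Finset.univ (G.tgt e)) =
      G.extendV n d (G.comp (Rᶜ \ {e}) Finset.univ (G.tgt e)) -
        (G.eIn (R ∩ G.edgesIn (G.comp Rᶜ Finset.univ (G.src e)))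
          (G.comp (Rᶜ \ {e}) Finset.univ (G.tgt e)) : ℤ))

/-- A morphism of graphs `f : Γ → Γ'` (a contraction of a set of edges followed by an
isomorphism): it is given by a map on vertices and an injective pullback map on
edges; non-contracted edges have matching endpoints, contracted edges have their two
endpoints identified, and each fiber over a vertex of `Γ'` is nonempty and connected
via contracted edges. -/
structure Hom where
  fV : V → V'
  fE : E' → E
  fE_inj : Function.Injective fE
  ends : ∀ e' : E',
    (fV (G.src (fE e')) = G'.src e' ∧ fV (G.tgt (fE e')) = G'.tgt e') ∨
    (fV (G.src (fE e')) = G'.tgt e' ∧ fV (G.tgt (fE e')) = G'.src e')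
  contr : ∀ e : E, (∀ e' : E', fE e' ≠ e) → fV (G.src e) = fV (G.tgt e)
  fibers : ∀ v' : V', G.IsConn (Finset.univ.filter (fun e => ∀ e' : E', fE e' ≠ e))
      (Finset.univ.filter (fun v => fV v = v'))

variable {G G'}

/-- `f_V^{-1}(Z)`. -/
def Hom.preV (f : G.Hom G') (Z : Finset V') : Finset V :=
  Finset.univ.filter (fun v => f.fV v ∈ Z)

/-- The set of edges contracted by `f`. -/
def Hom.contracted (f : G.Hom G') : Finset E :=
  Finset.univ.filter (fun e => ∀ e' : E', f.fE e' ≠ e)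

/-- The push-forward `f_* : 𝕆^d(Γ) → 𝕆^d(Γ')`. -/
def Hom.pushO (f : G.Hom G') (p : Finset E × (V → ℤ)) : Finset E' × (V' → ℤ) :=
  (Finset.univ.filter (fun e' => f.fE e' ∈ p.1),
   fun v' => divSum p.2 (f.preV {v'}) + (G.eIn (p.1 ∩ f.contracted) (f.preV {v'}) : ℤ))

end Multigraph

/-- The cycle multigraph `C_n`, with vertices `v_i` for `i ∈ Fin n` and edges `e_i`
joining `v_i` and `v_{i+1}` (indices mod `n`). -/
def cycleMG (n : ℕ) [NeZero n] : Multigraph (Fin n) (Fin n) :=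
  ⟨fun i => i, fun i => i + 1⟩

/-- The cyclic interval `V_{ij} = {v_{i+1}, …, v_j}` of vertices of the cycle `C_n`. -/
def Vij {n : ℕ} [NeZero n] (i j : Fin n) : Finset (Fin n) :=
  Finset.univ.filter (fun v => 1 ≤ (v - i).val ∧ (v - i).val ≤ (j - i).val)

section Stmt6Aux
set_option linter.unusedSectionVars false

variable {V E : Type} [Fintype V] [DecidableEq V] [Fintype E] [DecidableEq E]

lemma partIdx_eq_of_mem {L : List (Finset V)} (hdisj : L.Pairwise (fun A B => Disjoint A B))
    {v : V} {i : ℕ} (hi : i < L.length) (hv : v ∈ L[i]) : partIdx L v = i := by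
  have hex : ∃ A ∈ L, (fun A => decide (v ∈ A)) A = true :=
    ⟨L[i], List.getElem_mem hi, by simpa using hv⟩
  have hlt : partIdx L v < L.length := List.findIdx_lt_length_of_exists hex
  have hmem : v ∈ L[partIdx L v] := by
    have := List.findIdx_getElem (p := fun A => decide (v ∈ A)) (xs := L) (w := hlt)
    exact of_decide_eq_true this
  by_contra hne
  rcases Nat.lt_or_ge (partIdx L v) i with h | h
  · exact Finset.disjoint_left.mp
      (List.pairwise_iff_getElem.mp hdisj _ _ hlt hi h) hmem hv
  · have h' : i < partIdx L v := lt_of_le_of_ne h (fun hh => hne hh.symm)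
    exact Finset.disjoint_left.mp
      (List.pairwise_iff_getElem.mp hdisj _ _ hi hlt h') hv hmem

lemma partIdx_lt {L : List (Finset V)} (hcov : ∀ v : V, ∃ A ∈ L, v ∈ A) (v : V) :
    partIdx L v < L.length := by
  obtain ⟨A, hA, hv⟩ := hcov v
  exact List.findIdx_lt_length_of_exists ⟨A, hA, by simpa using hv⟩

lemma mem_partIdx {L : List (Finset V)} (hcov : ∀ v : V, ∃ A ∈ L, v ∈ A) (v : V) :
    v ∈ L[partIdx L v]'(partIdx_lt hcov v) := by
  have := List.findIdx_getElem (p := fun A => decide (v ∈ A)) (xs := L)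
    (w := partIdx_lt hcov v)
  exact of_decide_eq_true this

lemma partIdx_reverse {L : List (Finset V)} (hL : IsOrdPart L) (v : V) :
    partIdx L.reverse v = L.length - 1 - partIdx L v := by
  obtain ⟨-, hdisj, hcov⟩ := hL
  have hcov' : ∀ v : V, ∃ A ∈ L.reverse, v ∈ A := fun v => by
    obtain ⟨A, hA, hv⟩ := hcov v
    exact ⟨A, List.mem_reverse.mpr hA, hv⟩
  have hj := partIdx_lt hcov' v
  have hmem := mem_partIdx hcov' v
  rw [List.getElem_reverse] at hmem
  have hlen : L.reverse.length = L.length := List.length_reverse (as := L)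
  have h1 : L.length - 1 - partIdx L.reverse v < L.length := by omega
  have h2 := partIdx_eq_of_mem hdisj h1 hmem
  omega

/-- The sign of the crossing of `e` relative to the ordered partition `L`. -/
def sgE (G : Multigraph V E) (L : List (Finset V)) (e : E) : ℤ :=
  if partIdx L (G.src e) < partIdx L (G.tgt e) then 1
  else if partIdx L (G.tgt e) < partIdx L (G.src e) then -1 else 0

/-- Divisor of an antisymmetric edge weighting. -/
def D2 (G : Multigraph V E) (T : Finset E) (c : E → ℤ) : V → ℤ := fun v =>
  ∑ e ∈ T, ((if G.tgt e = v then c e else 0) + (if G.src e = v then -c e else 0))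

lemma divT_eq_D2 (G : Multigraph V E) (T : Finset E) (f : V → ℤ) :
    G.divT T f = D2 G T (fun e => f (G.src e) - f (G.tgt e)) := by
  funext v
  unfold Multigraph.divT D2
  apply Finset.sum_congr rfl
  intro e _
  by_cases h1 : G.tgt e = v <;> by_cases h2 : G.src e = v <;> simp [h1, h2] <;> ring

lemma D2_congr (G : Multigraph V E) (T : Finset E) {c₁ c₂ : E → ℤ}
    (h : ∀ e ∈ T, c₁ e = c₂ e) : D2 G T c₁ = D2 G T c₂ := by
  funext v
  unfold D2
  apply Finset.sum_congr rfl
  intro e he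
  rw [h e he]

lemma card_filter_int {p : E → Prop} (T : Finset E) :
    ((T.filter p).card : ℤ) = ∑ e ∈ T, if p e then (1 : ℤ) else 0 := by
  rw [Finset.card_filter]
  push_cast
  rfl

lemma Dif_eq (G : Multigraph V E) {L : List (Finset V)} (hL : IsOrdPart L) (T : Finset E) :
    G.divOP T L - G.divOP T L.reverse = D2 G T (sgE G L) := by
  have hcov := hL.2.2
  funext v
  simp only [Pi.sub_apply, Multigraph.divOP, D2, sgE, Finset.card_filter]
  push_cast
  rw [← Finset.sum_sub_distrib]
  apply Finset.sum_congr rfl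
  intro e _
  have ha := partIdx_reverse hL (G.src e)
  have hb := partIdx_reverse hL (G.tgt e)
  have ha' := partIdx_lt hcov (G.src e)
  have hb' := partIdx_lt hcov (G.tgt e)
  have hlen := List.length_reverse (as := L)
  have hva := partIdx_reverse hL v
  have hvb := partIdx_lt hcov v
  by_cases hc1 : G.tgt e = v <;> by_cases hc2 : G.src e = v <;>
    simp only [hc1, hc2, true_and, false_and, and_true, and_false, or_false, false_or,
      eq_self_iff_true, not_true, not_false_iff, if_true, if_false] <;>
    first
      | (split_ifs <;> omega)
      | simp

lemma pairD2 (G : Multigraph V E) (T : Finset E) (c : E → ℤ) (g : V → ℤ) :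
    ∑ v : V, D2 G T c v * g v = ∑ e ∈ T, c e * (g (G.tgt e) - g (G.src e)) := by
  unfold D2
  simp only [Finset.sum_mul]
  rw [Finset.sum_comm]
  apply Finset.sum_congr rfl
  intro e _
  simp [add_mul, ite_mul, zero_mul, neg_mul, Finset.sum_add_distrib, Finset.sum_ite_eq]
  ring

lemma getElem_congr_idx' {α : Type} (l : List α) {i j : ℕ} (h : i = j) (hj : j < l.length) :
    l[i]'(h ▸ hj) = l[j]'hj := by subst h; rfl

lemma level_partition_aux {V : Type} [Fintype V] [DecidableEq V] (g : V → ℤ) (vals : List ℤ)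
    (hs : List.Pairwise (· < ·) vals) (hmem : ∀ u : V, g u ∈ vals)
    (hall : ∀ z ∈ vals, ∃ u : V, g u = z) :
    ∃ M : List (Finset V), IsOrdPart M ∧
      (∀ u w : V, partIdx M u < partIdx M w ↔ g u < g w) ∧
      (∀ u w : V, g w = g u + 1 → partIdx M w = partIdx M u + 1) := by
  have hstrict : ∀ (i j : ℕ) (hi : i < vals.length) (hj : j < vals.length), i < j →
      vals[i] < vals[j] := fun i j hi hj h => List.pairwise_iff_getElem.mp hs i j hi hj h
  set F : ℤ → Finset V := fun z => Finset.univ.filter (fun u => g u = z) with hF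
  have hlen : (vals.map F).length = vals.length := List.length_map _
  have hcov : ∀ u : V, ∃ A ∈ vals.map F, u ∈ A := by
    intro u
    exact ⟨F (g u), List.mem_map.mpr ⟨g u, hmem u, rfl⟩, by simp [hF]⟩
  have hdisj : (vals.map F).Pairwise (fun A B => Disjoint A B) := by
    rw [List.pairwise_map]
    refine hs.imp ?_
    intro a b hab
    rw [Finset.disjoint_left]
    intro u hu hu'
    have h1 : g u = a := by simpa [hF] using hu
    have h2 : g u = b := by simpa [hF] using hu'
    omega
  have hτlt : ∀ u : V, partIdx (vals.map F) u < vals.length := by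
    intro u
    have := partIdx_lt hcov u
    omega
  have hτval : ∀ u : V, vals[partIdx (vals.map F) u]'(hτlt u) = g u := by
    intro u
    have hm := mem_partIdx hcov u
    rw [List.getElem_map] at hm
    simp only [hF, Finset.mem_filter, Finset.mem_univ, true_and] at hm
    exact hm.symm
  have hinj : ∀ u w : V, partIdx (vals.map F) u = partIdx (vals.map F) w → g u = g w := by
    intro u w h
    calc g u = vals[partIdx (vals.map F) u]'(hτlt u) := (hτval u).symm
      _ = vals[partIdx (vals.map F) w]'(hτlt w) := getElem_congr_idx' vals h (hτlt w)
      _ = g w := hτval w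
  have hcmp : ∀ u w : V, partIdx (vals.map F) u < partIdx (vals.map F) w ↔ g u < g w := by
    intro u w
    constructor
    · intro h
      have := hstrict _ _ (hτlt u) (hτlt w) h
      rwa [hτval u, hτval w] at this
    · intro h
      rcases lt_trichotomy (partIdx (vals.map F) u) (partIdx (vals.map F) w) with h' | h' | h'
      · exact h'
      · exact absurd (hinj u w h') (by omega)
      · have := hstrict _ _ (hτlt w) (hτlt u) h'
        rw [hτval u, hτval w] at this
        omega
  have hstep : ∀ u w : V, g w = g u + 1 → partIdx (vals.map F) w = partIdx (vals.map F) u + 1 := by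
    intro u w hgw
    have h1 : partIdx (vals.map F) u < partIdx (vals.map F) w := (hcmp u w).mpr (by omega)
    have hu' := hτlt u
    have hw' := hτlt w
    by_contra hne
    have h2 : partIdx (vals.map F) u + 1 < partIdx (vals.map F) w := by omega
    have ha := hstrict (partIdx (vals.map F) u) (partIdx (vals.map F) u + 1) (hτlt u)
      (by omega) (by omega)
    have hb := hstrict (partIdx (vals.map F) u + 1) (partIdx (vals.map F) w) (by omega)
      (hτlt w) h2
    rw [hτval u] at ha
    rw [hτval w] at hb
    omega
  refine ⟨vals.map F, ⟨?_, hdisj, hcov⟩, hcmp, hstep⟩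
  intro A hA
  obtain ⟨z, hz, rfl⟩ := List.mem_map.mp hA
  obtain ⟨u, hu⟩ := hall z hz
  exact ⟨u, by simp [hF, hu]⟩

end Stmt6Aux

/-- for an ordered partition `V_• = L` of `V(Γ)` and a spanning
subgraph `G` of `Γ` with edge set `T`, the divisor `D(𝒪_G(V_•)) - D(𝒪_G(V̄_•))` is
principal on `G` if and only if there is an ordered partition `W_• = M` of `V(Γ)`
inducing the same partial orientation on `T` and such that edges of `T` only join
consecutive parts of `M`; in that case
`D(𝒪_G(V_•)) - D(𝒪_G(V̄_•)) = ∑_{i=0}^{q} (q-i)·div(χ_{W_i})` where `q = |M| - 1`. -/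
theorem divOP_sub_principal_iff
    {V E : Type} [Fintype V] [DecidableEq V] [Fintype E] [DecidableEq E]
    (G : Multigraph V E) (hG : G.IsConn Finset.univ Finset.univ)
    (L : List (Finset V)) (hL : IsOrdPart L) (T : Finset E) :
    ((∃ f : V → ℤ, G.divOP T L - G.divOP T L.reverse = G.divT T f) ↔
      ∃ M : List (Finset V), IsOrdPart M ∧
        (∀ e ∈ T,
          ((partIdx L (G.src e) < partIdx L (G.tgt e)) ↔
            (partIdx M (G.src e) < partIdx M (G.tgt e))) ∧
          ((partIdx L (G.tgt e) < partIdx L (G.src e)) ↔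
            (partIdx M (G.tgt e) < partIdx M (G.src e)))) ∧
        (∀ e ∈ T, partIdx M (G.src e) ≠ partIdx M (G.tgt e) →
          partIdx M (G.tgt e) = partIdx M (G.src e) + 1 ∨
          partIdx M (G.src e) = partIdx M (G.tgt e) + 1)) ∧
    (∀ M : List (Finset V), IsOrdPart M →
      (∀ e ∈ T,
        ((partIdx L (G.src e) < partIdx L (G.tgt e)) ↔
          (partIdx M (G.src e) < partIdx M (G.tgt e))) ∧
        ((partIdx L (G.tgt e) < partIdx L (G.src e)) ↔
          (partIdx M (G.tgt e) < partIdx M (G.src e)))) →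
      (∀ e ∈ T, partIdx M (G.src e) ≠ partIdx M (G.tgt e) →
        partIdx M (G.tgt e) = partIdx M (G.src e) + 1 ∨
        partIdx M (G.src e) = partIdx M (G.tgt e) + 1) →
      G.divOP T L - G.divOP T L.reverse =
        ∑ i ∈ Finset.range M.length,
          (((M.length - 1 - i : ℕ) : ℤ)) •
            G.divT T (fun v => if v ∈ M.getD i ∅ then (1 : ℤ) else 0)) := by
  -- the per-edge sign relation given a "consecutive" ordered partition M
  have key : ∀ M : List (Finset V), IsOrdPart M →
      (∀ e ∈ T,
        ((partIdx L (G.src e) < partIdx L (G.tgt e)) ↔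
          (partIdx M (G.src e) < partIdx M (G.tgt e))) ∧
        ((partIdx L (G.tgt e) < partIdx L (G.src e)) ↔
          (partIdx M (G.tgt e) < partIdx M (G.src e)))) →
      (∀ e ∈ T, partIdx M (G.src e) ≠ partIdx M (G.tgt e) →
        partIdx M (G.tgt e) = partIdx M (G.src e) + 1 ∨
        partIdx M (G.src e) = partIdx M (G.tgt e) + 1) →
      ∀ e ∈ T, sgE G L e =
        ((partIdx M (G.tgt e) : ℤ)) - ((partIdx M (G.src e) : ℤ)) := by
    intro M hM hcomp hcons e he
    obtain ⟨hs, ht⟩ := hcomp e he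
    unfold sgE
    split_ifs with hab hba
    · have h1 := hs.mp hab
      rcases hcons e he (by omega) with h | h <;> omega
    · have h1 := ht.mp hba
      rcases hcons e he (by omega) with h | h <;> omega
    · have h1 : ¬ partIdx M (G.src e) < partIdx M (G.tgt e) := fun h => hab (hs.mpr h)
      have h2 : ¬ partIdx M (G.tgt e) < partIdx M (G.src e) := fun h => hba (ht.mpr h)
      omega
  constructor
  · constructor
    · -- forward direction
      rintro ⟨f, hf⟩
      have h0 : D2 G T (sgE G L) = D2 G T (fun e => f (G.src e) - f (G.tgt e)) := by
        rw [← Dif_eq G hL, hf, divT_eq_D2]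
      have h1 := pairD2 G T (sgE G L) f
      have h2 := pairD2 G T (fun e => f (G.src e) - f (G.tgt e)) f
      rw [h0] at h1
      have hpair : ∑ e ∈ T, sgE G L e * (f (G.tgt e) - f (G.src e)) =
          ∑ e ∈ T, (f (G.src e) - f (G.tgt e)) * (f (G.tgt e) - f (G.src e)) := by
        rw [← h1, h2]
      have hsum0 : ∑ e ∈ T, ((f (G.tgt e) - f (G.src e))^2 +
          sgE G L e * (f (G.tgt e) - f (G.src e))) = 0 := by
        rw [Finset.sum_add_distrib, hpair, ← Finset.sum_add_distrib]
        exact Finset.sum_eq_zero (fun e _ => by ring)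
      have hsg3 : ∀ e : E, sgE G L e = 1 ∨ sgE G L e = -1 ∨ sgE G L e = 0 := by
        intro e; unfold sgE; split_ifs <;> simp
      have hnonneg : ∀ e ∈ T, 0 ≤ (f (G.tgt e) - f (G.src e))^2 +
          sgE G L e * (f (G.tgt e) - f (G.src e)) := by
        intro e _
        rcases hsg3 e with h | h | h <;> rw [h] <;>
          rcases le_or_gt 0 (f (G.tgt e) - f (G.src e)) with hy | hy <;> nlinarith
      have hterm : ∀ e ∈ T, f (G.tgt e) - f (G.src e) = 0 ∨
          f (G.tgt e) - f (G.src e) = - sgE G L e := by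
        intro e he
        have h := (Finset.sum_eq_zero_iff_of_nonneg hnonneg).mp hsum0 e he
        have h2 : (f (G.tgt e) - f (G.src e)) *
            ((f (G.tgt e) - f (G.src e)) + sgE G L e) = 0 := by linear_combination h
        rcases mul_eq_zero.mp h2 with h3 | h3
        · exact Or.inl h3
        · exact Or.inr (by omega)
      -- no bad edges
      have hgood : ∀ e ∈ T, f (G.tgt e) - f (G.src e) = - sgE G L e := by
        by_contra hbad
        push_neg at hbad
        obtain ⟨e', he'T, he'⟩ := hbad
        set B := T.filter (fun e => f (G.tgt e) - f (G.src e) = 0 ∧ sgE G L e ≠ 0) with hB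
        have hBmem : ∀ e : E, e ∈ B ↔ e ∈ T ∧ (f (G.tgt e) - f (G.src e) = 0 ∧ sgE G L e ≠ 0) := by
          intro e; rw [hB, Finset.mem_filter]
        have he'B : e' ∈ B := by
          rcases hterm e' he'T with h | h
          · refine (hBmem e').mpr ⟨he'T, h, fun h0 => he' ?_⟩
            rw [h0, neg_zero]; exact h
          · exact absurd h he'
        set hEnd : E → V := fun e =>
          if partIdx L (G.src e) < partIdx L (G.tgt e) then G.tgt e else G.src e with hEnddef
        obtain ⟨v, hvH, hvmax⟩ := Finset.exists_max_image (B.image hEnd)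
          (fun u => partIdx L u) ⟨hEnd e', Finset.mem_image_of_mem _ he'B⟩
        set c : E → ℤ := fun e => sgE G L e + (f (G.tgt e) - f (G.src e)) with hc
        have hc0 : D2 G T c v = 0 := by
          have hx := congrFun h0 v
          have hD : D2 G T c v = D2 G T (sgE G L) v -
              D2 G T (fun e => f (G.src e) - f (G.tgt e)) v := by
            unfold D2
            rw [← Finset.sum_sub_distrib]
            apply Finset.sum_congr rfl
            intro e _
            split_ifs <;> simp [hc] <;> ring
          rw [hD, hx, sub_self]
        have hcB : ∀ e ∈ T, e ∉ B → c e = 0 := by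
          intro e heT heB
          rcases hterm e heT with h | h
          · by_cases hsg : sgE G L e = 0
            · simp [hc, h, hsg]
            · exact absurd ((hBmem e).mpr ⟨heT, h, hsg⟩) heB
          · simp [hc, h]
        have hcB' : ∀ e ∈ B, c e = sgE G L e := by
          intro e heB
          have h := ((hBmem e).mp heB).2.1
          simp [hc, h]
        have hterms : ∀ e ∈ T,
            0 ≤ (if G.tgt e = v then c e else 0) + (if G.src e = v then -c e else 0) := by
          intro e heT
          by_cases heB : e ∈ B
          · have hcs := hcB' e heB
            have hsgne := ((hBmem e).mp heB).2.2
            have hσ : partIdx L (G.src e) ≠ partIdx L (G.tgt e) := by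
              intro h; apply hsgne; unfold sgE; simp [h]
            rcases lt_or_gt_of_ne hσ with hlt | hgt
            · have hsg1 : sgE G L e = 1 := by unfold sgE; rw [if_pos hlt]
              have hEnde : hEnd e = G.tgt e := by rw [hEnddef]; simp [hlt]
              by_cases hsv : G.src e = v
              · exfalso
                have hmem : G.tgt e ∈ B.image hEnd := by
                  rw [← hEnde]; exact Finset.mem_image_of_mem _ heB
                have hle := hvmax _ hmem
                rw [← hsv] at hle
                omega
              · rw [if_neg hsv, hcs, hsg1]
                split_ifs <;> norm_num
            · have hsg1 : sgE G L e = -1 := by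
                unfold sgE; rw [if_neg (by omega), if_pos hgt]
              have hEnde : hEnd e = G.src e := by
                have hnl : ¬ partIdx L (G.src e) < partIdx L (G.tgt e) := by omega
                rw [hEnddef]; simp [hnl]
              by_cases htv : G.tgt e = v
              · exfalso
                have hmem : G.src e ∈ B.image hEnd := by
                  rw [← hEnde]; exact Finset.mem_image_of_mem _ heB
                have hle := hvmax _ hmem
                rw [← htv] at hle
                omega
              · rw [if_neg htv, hcs, hsg1]
                split_ifs <;> norm_num
          · rw [hcB e heT heB]
            simp
        unfold D2 at hc0
        have hzero := (Finset.sum_eq_zero_iff_of_nonneg hterms).mp hc0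
        obtain ⟨e₀, he₀B, he₀⟩ := Finset.mem_image.mp hvH
        have he₀T : e₀ ∈ T := ((hBmem e₀).mp he₀B).1
        have hz := hzero e₀ he₀T
        have hcs := hcB' e₀ he₀B
        have hsgne := ((hBmem e₀).mp he₀B).2.2
        have hσ : partIdx L (G.src e₀) ≠ partIdx L (G.tgt e₀) := by
          intro h; apply hsgne; unfold sgE; simp [h]
        have hloop : G.src e₀ ≠ G.tgt e₀ := fun h => hσ (by rw [h])
        rcases lt_or_gt_of_ne hσ with hlt | hgt
        · have hsg1 : sgE G L e₀ = 1 := by unfold sgE; rw [if_pos hlt]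
          have hEnde : hEnd e₀ = G.tgt e₀ := by rw [hEnddef]; simp [hlt]
          rw [hEnde] at he₀
          have hsv : G.src e₀ ≠ v := fun h => hloop (h.trans he₀.symm)
          rw [if_pos he₀, if_neg hsv, hcs, hsg1] at hz
          omega
        · have hsg1 : sgE G L e₀ = -1 := by
            unfold sgE; rw [if_neg (by omega), if_pos hgt]
          have hEnde : hEnd e₀ = G.src e₀ := by
            have hnl : ¬ partIdx L (G.src e₀) < partIdx L (G.tgt e₀) := by omega
            rw [hEnddef]; simp [hnl]
          rw [hEnde] at he₀
          have htv : G.tgt e₀ ≠ v := fun h => hloop (he₀.trans h.symm)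
          rw [if_neg htv, if_pos he₀, hcs, hsg1] at hz
          omega
      -- construct the level-set partition of g = -f
      obtain ⟨M, hMord, hcmp, hstep⟩ := level_partition_aux (fun u => - f u)
        (Finset.sort (Finset.image (fun u => - f u) Finset.univ) (· ≤ ·))
        (Finset.sortedLT_sort _).pairwise
        (fun u => (Finset.mem_sort _).mpr (Finset.mem_image_of_mem _ (Finset.mem_univ u)))
        (fun z hz => by simpa using Finset.mem_image.mp ((Finset.mem_sort _).mp hz))
      have hgs : ∀ e ∈ T, (- f (G.tgt e)) - (- f (G.src e)) = sgE G L e := by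
        intro e he
        have := hgood e he
        omega
      refine ⟨M, hMord, ?_, ?_⟩
      · intro e he
        have hsg := hgs e he
        have hA := hcmp (G.src e) (G.tgt e)
        have hB' := hcmp (G.tgt e) (G.src e)
        unfold sgE at hsg
        split_ifs at hsg <;>
          constructor <;> constructor <;> intro h <;> first | omega | (exact hA.mpr (by omega)) | (exact hB'.mpr (by omega)) | (exfalso; rcases (hA.mp h) with _ <;> omega) | (exfalso; rcases (hB'.mp h) with _ <;> omega)
      · intro e he hne
        have hsg := hgs e he
        have hA := hcmp (G.src e) (G.tgt e)
        have hB' := hcmp (G.tgt e) (G.src e)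
        have hgne : (- f (G.src e)) ≠ (- f (G.tgt e)) := by
          intro h
          apply hne
          omega
        unfold sgE at hsg
        split_ifs at hsg
        · exact Or.inl (hstep (G.src e) (G.tgt e) (by omega))
        · exact Or.inr (hstep (G.tgt e) (G.src e) (by omega))
        · omega
    · -- backward direction of the iff
      rintro ⟨M, hM, hcomp, hcons⟩
      refine ⟨fun v => -((partIdx M v : ℤ)), ?_⟩
      rw [Dif_eq G hL, divT_eq_D2]
      exact D2_congr G T (fun e he => by
        have := key M hM hcomp hcons e he
        omega)
  · -- the divisor formula
    intro M hM hcomp hcons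
    have hMcov := hM.2.2
    have hMdisj := hM.2.1
    have hτlt : ∀ u : V, partIdx M u < M.length := partIdx_lt hMcov
    have hmem_iff : ∀ i : ℕ, i < M.length → ∀ u : V, (u ∈ M.getD i ∅ ↔ partIdx M u = i) := by
      intro i hi u
      rw [List.getD_eq_getElem M ∅ hi]
      constructor
      · intro h; exact partIdx_eq_of_mem hMdisj hi h
      · intro h; subst h; exact mem_partIdx hMcov u
    have hF : ∀ u : V, (∑ i ∈ Finset.range M.length,
        ((M.length - 1 - i : ℕ) : ℤ) * (if u ∈ M.getD i ∅ then (1:ℤ) else 0)) =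
        ((M.length - 1 - partIdx M u : ℕ) : ℤ) := by
      intro u
      have hs := Finset.sum_eq_single_of_mem (s := Finset.range M.length)
        (f := fun i => ((M.length - 1 - i : ℕ) : ℤ) * (if u ∈ M.getD i ∅ then (1:ℤ) else 0))
        (partIdx M u) (Finset.mem_range.mpr (hτlt u))
        (fun i hi hne => mul_eq_zero_of_right _
          (if_neg (fun hm => hne (((hmem_iff i (Finset.mem_range.mp hi) u).mp hm).symm))))
      have hs' : (∑ i ∈ Finset.range M.length,
          ((M.length - 1 - i : ℕ) : ℤ) * (if u ∈ M.getD i ∅ then (1:ℤ) else 0)) =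
          ((M.length - 1 - partIdx M u : ℕ) : ℤ) *
            (if u ∈ M.getD (partIdx M u) ∅ then (1:ℤ) else 0) := hs
      rw [hs', if_pos ((hmem_iff _ (hτlt u) u).mpr rfl), mul_one]
    have hadd : ∀ f g : V → ℤ, G.divT T (f + g) = G.divT T f + G.divT T g := by
      intro f g
      funext v
      simp only [Multigraph.divT, Pi.add_apply]
      rw [← Finset.sum_add_distrib]
      apply Finset.sum_congr rfl
      intro e _
      split_ifs <;> ring
    have hzero : G.divT T (0 : V → ℤ) = 0 := by
      funext v
      simp [Multigraph.divT]
    set φ : (V → ℤ) →+ (V → ℤ) := ⟨⟨G.divT T, hzero⟩, fun x y => hadd x y⟩ with hφdef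
    have hφ : ∀ h : V → ℤ, φ h = G.divT T h := fun _ => rfl
    have hcalc : (∑ i ∈ Finset.range M.length,
          (((M.length - 1 - i : ℕ) : ℤ)) •
            G.divT T (fun v => if v ∈ M.getD i ∅ then (1 : ℤ) else 0)) =
        G.divT T (fun u => ((M.length - 1 - partIdx M u : ℕ) : ℤ)) := by
      calc (∑ i ∈ Finset.range M.length,
          (((M.length - 1 - i : ℕ) : ℤ)) •
            G.divT T (fun v => if v ∈ M.getD i ∅ then (1 : ℤ) else 0))
          = ∑ i ∈ Finset.range M.length,
            φ ((((M.length - 1 - i : ℕ) : ℤ)) • (fun v => if v ∈ M.getD i ∅ then (1 : ℤ) else 0)) := by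
            apply Finset.sum_congr rfl
            intro i _
            rw [AddMonoidHom.map_zsmul, hφ]
        _ = φ (∑ i ∈ Finset.range M.length,
            (((M.length - 1 - i : ℕ) : ℤ)) • (fun v => if v ∈ M.getD i ∅ then (1 : ℤ) else 0)) :=
            (map_sum φ _ _).symm
        _ = G.divT T (fun u => ((M.length - 1 - partIdx M u : ℕ) : ℤ)) := by
            rw [hφ]
            have hfun : (∑ i ∈ Finset.range M.length,
                (((M.length - 1 - i : ℕ) : ℤ)) •
                  (fun v => if v ∈ M.getD i ∅ then (1 : ℤ) else 0)) =
                (fun u => ((M.length - 1 - partIdx M u : ℕ) : ℤ) : V → ℤ) := by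
              funext u
              rw [Finset.sum_apply]
              simp only [Pi.smul_apply, smul_eq_mul]
              exact hF u
            rw [hfun]
    rw [hcalc, Dif_eq G hL, divT_eq_D2]
    apply D2_congr
    intro e he
    have hk := key M hM hcomp hcons e he
    have h1 := hτlt (G.src e)
    have h2 := hτlt (G.tgt e)
    omega
end
end

section
/- Let Γ be a finite connected multigraph and 𝒟 a degeneracy subset for Γ. Let G be a 𝒟-admissible spanning subgraph of Γ and let e ∈ E(G) be a non-loop edge such that G∖{e} is still 𝒟-admissible. Let c_e : Γ → Γ/{e} be the contraction of e, with vertex map (c_e)_V. Then c_𝒟(G) = c_𝒟(G∖{e}) + c_{(c_e)_*𝒟}(G/{e}), where (c_e)_*𝒟 := {Z ∈ BCon(Γ/{e}) : (c_e)_V^{−1}(Z) ∈ 𝒟} (a degeneracy subset for Γ/{e}), G/{e} is the image of G in Γ/{e}, and c_{(c_e)_*𝒟}(G/{e}) counts the (c_e)_*𝒟-admissible spanning forests of Γ/{e} contained in G/{e}. -/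
noncomputable section

attribute [local instance 10] Classical.propDecidable

section DC

open Finset

namespace DC
set_option linter.unusedSectionVars false

variable {V E V' E' : Type} [Fintype V] [DecidableEq V] [Fintype E] [DecidableEq E]
  [Fintype V'] [DecidableEq V'] [Fintype E'] [DecidableEq E']
  {G : Multigraph V E} {G' : Multigraph V' E'}
  {f : G.Hom G'} {e : E}

lemma fE_ne (hcontr : f.contracted = {e}) (e' : E') : f.fE e' ≠ e := by
  have he : e ∈ f.contracted := by rw [hcontr]; exact Finset.mem_singleton_self e
  exact (Finset.mem_filter.mp he).2 e'

lemma fE_surj (hcontr : f.contracted = {e}) {a : E} (ha : a ≠ e) : ∃ e', f.fE e' = a := by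
  by_contra h
  push_neg at h
  have : a ∈ f.contracted :=
    Finset.mem_filter.mpr ⟨Finset.mem_univ _, fun e' => h e'⟩
  rw [hcontr, Finset.mem_singleton] at this
  exact ha this

lemma src_tgt (hcontr : f.contracted = {e}) : f.fV (G.src e) = f.fV (G.tgt e) :=
  f.contr e (fun e' => fE_ne hcontr e')

lemma fV_eq_cases (hcontr : f.contracted = {e}) {a b : V} (h : f.fV a = f.fV b) :
    a = b ∨ (a = G.src e ∧ b = G.tgt e) ∨ (a = G.tgt e ∧ b = G.src e) := by
  have hfib := (f.fibers (f.fV a)).2 a (by simp) b (by simp [h.symm])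
  have key : ∀ x y : V,
      G.Linked (Finset.univ.filter (fun x => ∀ e' : E', f.fE e' ≠ x))
        (Finset.univ.filter (fun v => f.fV v = f.fV a)) x y →
      x = y ∨ ((x = G.src e ∨ x = G.tgt e) ∧ (y = G.src e ∨ y = G.tgt e)) := by
    intro x y hxy
    induction hxy with
    | refl => exact Or.inl rfl
    | @tail c y h1 h2 ih =>
      obtain ⟨_, _, t, ht, hor⟩ := h2
      have hte : t = e := by
        have h3 : t ∈ f.contracted := ht
        rwa [hcontr, Finset.mem_singleton] at h3
      rw [hte] at hor
      have hcy : (c = G.src e ∨ c = G.tgt e) ∧ (y = G.src e ∨ y = G.tgt e) := by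
        rcases hor with ⟨h3, h4⟩ | ⟨h3, h4⟩
        · exact ⟨Or.inl h3.symm, Or.inr h4.symm⟩
        · exact ⟨Or.inr h4.symm, Or.inl h3.symm⟩
      rcases ih with rfl | ⟨hx, _⟩
      · exact Or.inr hcy
      · exact Or.inr ⟨hx, hcy.2⟩
  rcases key _ _ hfib with rfl | ⟨(rfl | rfl), (hb | hb)⟩
  · exact Or.inl rfl
  · exact Or.inl hb.symm
  · exact Or.inr (Or.inl ⟨rfl, hb⟩)
  · exact Or.inr (Or.inr ⟨rfl, hb⟩)
  · exact Or.inl hb.symm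

lemma fV_surj (f : G.Hom G') : Function.Surjective f.fV := fun v' => by
  obtain ⟨v, hv⟩ := (f.fibers v').1
  exact ⟨v, (Finset.mem_filter.mp hv).2⟩

lemma mem_preV {Z : Finset V'} {v : V} : v ∈ f.preV Z ↔ f.fV v ∈ Z := by
  simp [Multigraph.Hom.preV]

lemma preV_compl (Z : Finset V') : f.preV Zᶜ = (f.preV Z)ᶜ := by
  ext v; simp [Multigraph.Hom.preV]

lemma preV_univ : f.preV (univ : Finset V') = univ := by
  simp [Multigraph.Hom.preV]

lemma preV_inj (f : G.Hom G') : Function.Injective f.preV := by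
  intro Z₁ Z₂ h
  ext z
  obtain ⟨v, rfl⟩ := fV_surj f z
  constructor <;> intro hz
  · have h1 : v ∈ f.preV Z₁ := mem_preV.mpr hz
    rw [h] at h1; exact mem_preV.mp h1
  · have h1 : v ∈ f.preV Z₂ := mem_preV.mpr hz
    rw [← h] at h1; exact mem_preV.mp h1

lemma linked_of_fV_eq (hcontr : f.contracted = {e}) {T : Finset E} (hT : e ∈ T)
    {W : Finset V} {a b : V} (ha : a ∈ W) (hb : b ∈ W) (h : f.fV a = f.fV b) :
    G.Linked T W a b := by
  rcases fV_eq_cases hcontr h with rfl | ⟨rfl, rfl⟩ | ⟨rfl, rfl⟩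
  · exact Relation.ReflTransGen.refl
  · exact Relation.ReflTransGen.single ⟨ha, hb, e, hT, Or.inl ⟨rfl, rfl⟩⟩
  · exact Relation.ReflTransGen.single ⟨ha, hb, e, hT, Or.inr ⟨rfl, rfl⟩⟩

lemma linked_map (hcontr : f.contracted = {e}) {T : Finset E} {W' : Finset V'} {a b : V}
    (h : G.Linked T (f.preV W') a b) :
    G'.Linked (univ.filter (fun e' => f.fE e' ∈ T)) W' (f.fV a) (f.fV b) := by
  induction h with
  | refl => exact Relation.ReflTransGen.refl
  | @tail c b h1 h2 ih =>
    obtain ⟨hc, hb, t, ht, hor⟩ := h2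
    by_cases hte : t = e
    · have heq : f.fV c = f.fV b := by
        rcases hor with ⟨h3, h4⟩ | ⟨h3, h4⟩
        · rw [← h3, ← h4, hte]; exact src_tgt hcontr
        · rw [← h3, ← h4, hte]; exact (src_tgt hcontr).symm
      exact heq ▸ ih
    · obtain ⟨t', rfl⟩ := fE_surj hcontr hte
      refine ih.tail ⟨mem_preV.mp hc, mem_preV.mp hb, t', Finset.mem_filter.mpr ⟨Finset.mem_univ _, ht⟩, ?_⟩
      rcases f.ends t' with ⟨hx, hy⟩ | ⟨hx, hy⟩ <;> rcases hor with ⟨h3, h4⟩ | ⟨h3, h4⟩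
      · exact Or.inl ⟨by rw [← hx, h3], by rw [← hy, h4]⟩
      · exact Or.inr ⟨by rw [← hx, h3], by rw [← hy, h4]⟩
      · exact Or.inr ⟨by rw [← hy, h4], by rw [← hx, h3]⟩
      · exact Or.inl ⟨by rw [← hy, h4], by rw [← hx, h3]⟩

lemma linked_lift (hcontr : f.contracted = {e}) {T : Finset E} (hT : e ∈ T)
    {W' : Finset V'} {a' b' : V'}
    (h : G'.Linked (univ.filter (fun e' => f.fE e' ∈ T)) W' a' b') :
    ∀ a b : V, f.fV a = a' → f.fV b = b' → a ∈ f.preV W' → b ∈ f.preV W' →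
      G.Linked T (f.preV W') a b := by
  induction h with
  | refl =>
    intro a b ha hb haW hbW
    exact linked_of_fV_eq hcontr hT haW hbW (ha.trans hb.symm)
  | @tail c' d' h1 h2 ih =>
    intro a b ha hb haW hbW
    obtain ⟨hc', hb', t', ht', hor'⟩ := h2
    have htT : f.fE t' ∈ T := (Finset.mem_filter.mp ht').2
    have step : ∀ u w : V, f.fV u = c' → f.fV w = d' →
        ((G.src (f.fE t') = u ∧ G.tgt (f.fE t') = w) ∨
         (G.src (f.fE t') = w ∧ G.tgt (f.fE t') = u)) →
        G.Linked T (f.preV W') a b := by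
      intro u w hu hw horr
      have huW : u ∈ f.preV W' := mem_preV.mpr (hu ▸ hc')
      have hwW : w ∈ f.preV W' := mem_preV.mpr (hw ▸ hb')
      have l1 : G.Linked T (f.preV W') a u := ih a u ha hu haW huW
      have l2 : G.Step T (f.preV W') u w := ⟨huW, hwW, f.fE t', htT, horr⟩
      have l3 : G.Linked T (f.preV W') w b :=
        linked_of_fV_eq hcontr hT hwW hbW (by rw [hw, hb])
      exact (l1.tail l2).trans l3
    rcases f.ends t' with ⟨hx, hy⟩ | ⟨hx, hy⟩ <;> rcases hor' with ⟨h3, h4⟩ | ⟨h3, h4⟩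
    · exact step _ _ (hx.trans h3) (hy.trans h4) (Or.inl ⟨rfl, rfl⟩)
    · exact step _ _ (hy.trans h4) (hx.trans h3) (Or.inr ⟨rfl, rfl⟩)
    · exact step _ _ (hy.trans h3) (hx.trans h4) (Or.inr ⟨rfl, rfl⟩)
    · exact step _ _ (hx.trans h4) (hy.trans h3) (Or.inl ⟨rfl, rfl⟩)

lemma linked_iff (hcontr : f.contracted = {e}) {T : Finset E} (hT : e ∈ T)
    {W' : Finset V'} {a b : V} (ha : a ∈ f.preV W') (hb : b ∈ f.preV W') :
    G.Linked T (f.preV W') a b ↔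
      G'.Linked (univ.filter (fun e' => f.fE e' ∈ T)) W' (f.fV a) (f.fV b) :=
  ⟨linked_map hcontr, fun h => linked_lift hcontr hT h a b rfl rfl ha hb⟩

lemma comp_eq (hcontr : f.contracted = {e}) {T : Finset E} (hT : e ∈ T)
    {W' : Finset V'} {v : V} (hv : v ∈ f.preV W') :
    G.comp T (f.preV W') v =
      f.preV (G'.comp (univ.filter (fun e' => f.fE e' ∈ T)) W' (f.fV v)) := by
  ext u
  unfold Multigraph.comp Multigraph.Hom.preV
  simp only [Finset.mem_filter, Finset.mem_univ, true_and]
  constructor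
  · rintro ⟨hu, hl⟩
    exact ⟨hu, linked_map hcontr hl⟩
  · rintro ⟨hu, hl⟩
    exact ⟨hu, linked_lift hcontr hT hl v u rfl rfl hv (mem_preV.mpr hu)⟩

lemma comps_eq (hcontr : f.contracted = {e}) {T : Finset E} (hT : e ∈ T) (W' : Finset V') :
    G.comps T (f.preV W') =
      (G'.comps (univ.filter (fun e' => f.fE e' ∈ T)) W').image f.preV := by
  ext C
  simp only [Multigraph.comps, Finset.mem_image]
  constructor
  · rintro ⟨v, hv, rfl⟩
    exact ⟨G'.comp _ W' (f.fV v), ⟨f.fV v, mem_preV.mp hv, rfl⟩,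
      (comp_eq hcontr hT hv).symm⟩
  · rintro ⟨C', ⟨v', hv', rfl⟩, rfl⟩
    obtain ⟨v, rfl⟩ := fV_surj f v'
    exact ⟨v, mem_preV.mpr hv', comp_eq hcontr hT (mem_preV.mpr hv')⟩

lemma isConn_iff (hcontr : f.contracted = {e}) {T : Finset E} (hT : e ∈ T) (W' : Finset V') :
    G.IsConn T (f.preV W') ↔ G'.IsConn (univ.filter (fun e' => f.fE e' ∈ T)) W' := by
  constructor
  · rintro ⟨⟨v, hv⟩, h⟩
    refine ⟨⟨f.fV v, mem_preV.mp hv⟩, fun a' ha' b' hb' => ?_⟩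
    obtain ⟨a, rfl⟩ := fV_surj f a'
    obtain ⟨b, rfl⟩ := fV_surj f b'
    exact linked_map hcontr (h a (mem_preV.mpr ha') b (mem_preV.mpr hb'))
  · rintro ⟨⟨v', hv'⟩, h⟩
    obtain ⟨v, rfl⟩ := fV_surj f v'
    refine ⟨⟨v, mem_preV.mpr hv'⟩, fun a ha b hb => ?_⟩
    exact linked_lift hcontr hT (h _ (mem_preV.mp ha) _ (mem_preV.mp hb)) a b rfl rfl ha hb

lemma filter_mem_univ_eq (f : G.Hom G') :
    (univ.filter (fun e' : E' => f.fE e' ∈ (univ : Finset E))) = univ := by simp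

lemma con_iff (hcontr : f.contracted = {e}) (Z : Finset V') :
    f.preV Z ∈ G.Con ↔ Z ∈ G'.Con := by
  have h := isConn_iff (hcontr := hcontr) (T := (univ : Finset E)) (Finset.mem_univ e) Z
  rw [filter_mem_univ_eq] at h
  exact h

lemma bcon_iff (hcontr : f.contracted = {e}) (Z : Finset V') :
    f.preV Z ∈ G.BCon ↔ Z ∈ G'.BCon := by
  have h1 := con_iff (hcontr := hcontr) Z
  have h2 := con_iff (hcontr := hcontr) Zᶜ
  rw [preV_compl] at h2
  exact and_congr h1 h2

lemma comps_compl_eq (hcontr : f.contracted = {e}) (Z : Finset V') :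
    G.comps Finset.univ (f.preV Z)ᶜ =
      (G'.comps Finset.univ Zᶜ).image f.preV := by
  rw [← preV_compl]
  have h := comps_eq (hcontr := hcontr) (T := (univ : Finset E)) (Finset.mem_univ e) Zᶜ
  rw [filter_mem_univ_eq] at h
  exact h

lemma extOf_iff {𝒟 : Set (Finset V)} (hcontr : f.contracted = {e})
    (h𝒟 : G.IsDegSubset 𝒟) (Z : Finset V') :
    f.preV Z ∈ G.ExtOf 𝒟 ↔
      Z ∈ G'.ExtOf {Z | Z ∈ G'.BCon ∧ f.preV Z ∈ 𝒟} := by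
  unfold Multigraph.ExtOf
  simp only [Set.mem_setOf_eq]
  constructor
  · rintro (h | ⟨hcon, hcomps⟩)
    · exact Or.inl (preV_inj f (h.trans preV_univ.symm))
    · refine Or.inr ⟨(con_iff hcontr Z).mp hcon, fun K hK => ?_⟩
      have hKD : f.preV K ∈ 𝒟 := by
        apply hcomps
        rw [comps_compl_eq hcontr]
        exact Finset.mem_image_of_mem _ hK
      exact ⟨(bcon_iff hcontr K).mp (h𝒟.subset _ hKD), hKD⟩
  · rintro (rfl | ⟨hcon, hcomps⟩)
    · exact Or.inl preV_univ
    · refine Or.inr ⟨(con_iff hcontr Z).mpr hcon, fun C hC => ?_⟩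
      rw [comps_compl_eq hcontr] at hC
      obtain ⟨K, hK, rfl⟩ := Finset.mem_image.mp hC
      exact (hcomps K hK).2

lemma admRem_iff {𝒟 : Set (Finset V)} (hcontr : f.contracted = {e})
    (h𝒟 : G.IsDegSubset 𝒟) {F : Finset E} (heF : e ∉ F) :
    G.AdmRem 𝒟 F ↔
      G'.AdmRem {Z | Z ∈ G'.BCon ∧ f.preV Z ∈ 𝒟}
        (univ.filter (fun e' => f.fE e' ∈ F)) := by
  have hT : e ∈ Fᶜ := Finset.mem_compl.mpr heF
  have hT' : (univ.filter (fun e' : E' => f.fE e' ∈ Fᶜ)) =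
      (univ.filter (fun e' : E' => f.fE e' ∈ F))ᶜ := by
    ext e'; simp
  have hcomps : G.compsRem F =
      (G'.compsRem (univ.filter (fun e' => f.fE e' ∈ F))).image f.preV := by
    unfold Multigraph.compsRem
    rw [← preV_univ (f := f), comps_eq hcontr hT, hT']
  unfold Multigraph.AdmRem
  rw [hcomps]
  constructor
  · intro h C' hC'
    exact (extOf_iff hcontr h𝒟 C').mp (h _ (Finset.mem_image_of_mem _ hC'))
  · intro h C hC
    obtain ⟨C', hC', rfl⟩ := Finset.mem_image.mp hC
    exact (extOf_iff hcontr h𝒟 C').mpr (h C' hC')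

lemma card_V (hcontr : f.contracted = {e}) (hloop : G.src e ≠ G.tgt e) :
    Fintype.card V = Fintype.card V' + 1 := by
  have h0 : (univ : Finset V).card =
      ∑ v' ∈ (univ : Finset V'), ((univ : Finset V).filter (fun v => f.fV v = v')).card :=
    Finset.card_eq_sum_card_fiberwise (fun v _ => Finset.mem_univ (f.fV v))
  have hcard : ∀ v' : V',
      ((univ : Finset V).filter (fun v => f.fV v = v')).card =
        if v' = f.fV (G.src e) then 2 else 1 := by
    intro v'
    split_ifs with hv'
    · have : (univ : Finset V).filter (fun v => f.fV v = v') = {G.src e, G.tgt e} := by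
        ext v
        simp only [Finset.mem_filter, Finset.mem_univ, true_and, Finset.mem_insert,
          Finset.mem_singleton]
        constructor
        · intro hv
          rcases fV_eq_cases hcontr (hv.trans hv') with h | ⟨h1, h2⟩ | ⟨h1, h2⟩
          · exact Or.inl h
          · exact absurd h2 hloop
          · exact Or.inr h1
        · rintro (rfl | rfl)
          · exact hv'.symm
          · rw [← src_tgt hcontr]; exact hv'.symm
      rw [this]
      exact Finset.card_pair hloop
    · rw [Finset.card_eq_one]
      obtain ⟨v, rfl⟩ := fV_surj f v'
      refine ⟨v, ?_⟩
      ext u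
      simp only [Finset.mem_filter, Finset.mem_univ, true_and, Finset.mem_singleton]
      constructor
      · intro hu
        rcases fV_eq_cases hcontr hu with h | ⟨h1, h2⟩ | ⟨h1, h2⟩
        · exact h
        · exact absurd (by rw [h2, ← src_tgt hcontr]) hv'
        · exact absurd (by rw [h2]) hv'
      · rintro rfl; rfl
  rw [← Finset.card_univ, h0, Finset.sum_congr rfl (fun v' _ => hcard v')]
  have : ∀ v' : V', (if v' = f.fV (G.src e) then 2 else 1) =
      (if v' = f.fV (G.src e) then 1 else 0) + 1 := by
    intro v'; split_ifs <;> rfl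
  rw [Finset.sum_congr rfl (fun v' _ => this v'), Finset.sum_add_distrib,
    Finset.sum_ite_eq' Finset.univ (f.fV (G.src e)) (fun _ => 1)]
  simp [Finset.card_univ, Nat.add_comm]

lemma card_compl (hcontr : f.contracted = {e}) {F : Finset E} (heF : e ∉ F) :
    Fᶜ.card = ((univ.filter (fun e' : E' => f.fE e' ∈ F))ᶜ).card + 1 := by
  have h1 : ((univ.filter (fun e' : E' => f.fE e' ∈ F))ᶜ : Finset E') =
      univ.filter (fun e' => f.fE e' ∉ F) := by
    ext e'; simp
  have h2 : Fᶜ = insert e ((univ.filter (fun e' : E' => f.fE e' ∉ F)).image f.fE) := by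
    ext a
    simp only [Finset.mem_compl, Finset.mem_insert, Finset.mem_image, Finset.mem_filter,
      Finset.mem_univ, true_and]
    constructor
    · intro ha
      by_cases hae : a = e
      · exact Or.inl hae
      · obtain ⟨e', rfl⟩ := fE_surj hcontr hae
        exact Or.inr ⟨e', ha, rfl⟩
    · rintro (rfl | ⟨e', ha, rfl⟩)
      · exact heF
      · exact ha
  have h3 : e ∉ (univ.filter (fun e' : E' => f.fE e' ∉ F)).image f.fE := by
    simp only [Finset.mem_image]
    rintro ⟨e', -, h⟩
    exact fE_ne hcontr e' h
  rw [h1, h2, Finset.card_insert_of_notMem h3,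
    Finset.card_image_of_injective _ f.fE_inj]

lemma forestRem_iff (hcontr : f.contracted = {e}) (hloop : G.src e ≠ G.tgt e)
    {F : Finset E} (heF : e ∉ F) :
    G.ForestRem F ↔ G'.ForestRem (univ.filter (fun e' => f.fE e' ∈ F)) := by
  have hT : e ∈ Fᶜ := Finset.mem_compl.mpr heF
  have hT' : (univ.filter (fun e' : E' => f.fE e' ∈ Fᶜ)) =
      (univ.filter (fun e' : E' => f.fE e' ∈ F))ᶜ := by
    ext e'; simp
  have hb : G.b0Rem F = G'.b0Rem (univ.filter (fun e' => f.fE e' ∈ F)) := by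
    unfold Multigraph.b0Rem Multigraph.compsRem
    conv_lhs => rw [← preV_univ (f := f)]
    rw [comps_eq hcontr hT, hT', Finset.card_image_of_injective _ (preV_inj f)]
  unfold Multigraph.ForestRem
  rw [hb, card_compl hcontr heF, card_V hcontr hloop]
  omega

end DC
end DC
/-- deletion–contraction for the `𝒟`-complexity: for a
`𝒟`-admissible spanning subgraph `G = Γ∖S`, a non-loop edge `e` of `G` with `G∖{e}`
still `𝒟`-admissible, and a contraction morphism `c_e : Γ → Γ/{e}` contracting
exactly `e`, one has `c_𝒟(G) = c_𝒟(G∖{e}) + c_{(c_e)_*𝒟}(G/{e})`. -/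
theorem deletion_contraction_complexity
    {V E V' E' : Type} [Fintype V] [DecidableEq V] [Fintype E] [DecidableEq E]
    [Fintype V'] [DecidableEq V'] [Fintype E'] [DecidableEq E']
    (G : Multigraph V E) (G' : Multigraph V' E')
    (hG : G.IsConn Finset.univ Finset.univ)
    (𝒟 : Set (Finset V)) (h𝒟 : G.IsDegSubset 𝒟)
    (S : Finset E) (hadm : G.AdmRem 𝒟 S)
    (e : E) (he : e ∉ S) (hloop : G.src e ≠ G.tgt e)
    (hdel : G.AdmRem 𝒟 (insert e S))
    (f : G.Hom G') (hcontr : f.contracted = {e}) :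
    G.cD 𝒟 S = G.cD 𝒟 (insert e S) +
      G'.cD {Z | Z ∈ G'.BCon ∧ f.preV Z ∈ 𝒟}
        (Finset.univ.filter (fun e' => f.fE e' ∈ S)) := by
  classical
  unfold Multigraph.cD
  rw [← Finset.card_filter_add_card_filter_not
    (s := Finset.univ.filter (fun F => S ⊆ F ∧ G.ForestRem F ∧ G.AdmRem 𝒟 F))
    (p := fun F : Finset E => e ∈ F)]
  congr 1
  · congr 1
    ext F
    simp only [Finset.mem_filter, Finset.mem_univ, true_and, Finset.insert_subset_iff]
    tauto
  · apply Finset.card_bij'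
      (i := fun F _ => Finset.univ.filter (fun e' => f.fE e' ∈ F))
      (j := fun F' _ => F'.image f.fE)
    · -- hi : maps into target
      intro F hF
      simp only [Finset.mem_filter, Finset.mem_univ, true_and] at hF ⊢
      obtain ⟨⟨hSF, hforest, hadmF⟩, heF⟩ := hF
      refine ⟨?_, (DC.forestRem_iff hcontr hloop heF).mp hforest,
        (DC.admRem_iff hcontr h𝒟 heF).mp hadmF⟩
      intro e' he'
      simp only [Finset.mem_filter, Finset.mem_univ, true_and] at he' ⊢
      exact hSF he'
    · -- hj : maps back into source
      intro F' hF'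
      simp only [Finset.mem_filter, Finset.mem_univ, true_and] at hF' ⊢
      obtain ⟨hSF', hforest', hadm'⟩ := hF'
      have heF : e ∉ F'.image f.fE := by
        simp only [Finset.mem_image]
        rintro ⟨e', -, h⟩
        exact DC.fE_ne hcontr e' h
      have hfix : Finset.univ.filter (fun e' => f.fE e' ∈ F'.image f.fE) = F' := by
        ext e'
        simp [f.fE_inj.mem_finset_image]
      refine ⟨⟨?_, ?_, ?_⟩, heF⟩
      · intro a haS
        have hae : a ≠ e := fun h => he (h ▸ haS)
        obtain ⟨e', rfl⟩ := DC.fE_surj hcontr hae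
        exact Finset.mem_image_of_mem _ (hSF' (by simp [haS]))
      · rw [DC.forestRem_iff hcontr hloop heF, hfix]; exact hforest'
      · rw [DC.admRem_iff hcontr h𝒟 heF, hfix]; exact hadm'
    · -- left inverse
      intro F hF
      simp only [Finset.mem_filter] at hF
      have heF : e ∉ F := hF.2
      ext a
      simp only [Finset.mem_image, Finset.mem_filter, Finset.mem_univ, true_and]
      constructor
      · rintro ⟨e', h, rfl⟩; exact h
      · intro haF
        have hae : a ≠ e := fun h => heF (h ▸ haF)
        obtain ⟨e', rfl⟩ := DC.fE_surj hcontr hae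
        exact ⟨e', haF, rfl⟩
    · -- right inverse
      intro F' hF'
      ext e'
      simp [f.fE_inj.mem_finset_image]
end
end
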